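/- arXiv:2601.04004 — 7 statements merged into one kernel-verified Lean document; each statement's English description precedes it below -/
import Mathlib

section
/- The common neighborhood matrix of the star graph K_{1,n} (n ≥ 2) has eigenvalues 0 with multiplicity 1, -1 with multiplicity n-1, and n-1 with multiplicity 1. -/
/-!
Deleting the centre's row and column from `CN(K_{1,n})` leaves the adjacency matrix `J - I` of
`K_n`, and the centre's row vanishes, so Laplace expansion along it splits off a factor `X`.
Since `J` has rank one with trace `n`, `charpoly J = X ^ (n - 1) * (X - n)`, and shifting by `I`
substitutes `X + 1` for `X`.
-/

open Polynomial

theorem SimpleGraph.charpoly_adjMatrix_completeGraph {V R : Type*} [Fintype V] [DecidableEq V]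
    [Nonempty V] [CommRing R] :
    ((completeGraph V).adjMatrix R).charpoly =
      (X + 1) ^ (Fintype.card V - 1) * (X - C ((Fintype.card V : R) - 1)) := by
  have hJ : (completeGraph V).adjMatrix R = Matrix.vecMulVec 1 1 - Matrix.scalar V 1 := by
    rw [adjMatrix_completeGraph_eq_of_one_sub_one]
    ext i j
    simp
  have hcard : Fintype.card V = Fintype.card V - 1 + 1 :=
    (Nat.sub_add_cancel Fintype.card_pos).symm
  rw [hJ, Matrix.charpoly_sub_scalar, Matrix.charpoly_vecMulVec]
  conv_lhs => rw [hcard]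
  simp [one_dotProduct_one, smul_eq_C_mul]
  ring

namespace Matrix

variable {R : Type*} [CommRing R]

theorem charmatrix_submatrix {m n : Type*} [Fintype m] [DecidableEq m] [Fintype n]
    [DecidableEq n] (M : Matrix n n R) {f : m → n} (hf : Function.Injective f) :
    (M.submatrix f f).charmatrix = M.charmatrix.submatrix f f := by
  ext i j
  simp [charmatrix_apply, diagonal_apply, hf.eq_iff]

theorem charpoly_eq_X_mul_charpoly_submatrix_succ {n : ℕ}
    (M : Matrix (Fin (n + 1)) (Fin (n + 1)) R) (hM : ∀ j, M 0 j = 0) :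
    M.charpoly = X * (M.submatrix Fin.succ Fin.succ).charpoly := by
  rw [charpoly, det_succ_row_zero, Fin.sum_univ_succ]
  simp [hM, (Fin.succ_ne_zero _).symm, charpoly, charmatrix_submatrix _ (Fin.succ_injective n)]

end Matrix

theorem star_cn_charpoly (n : ℕ) (hn : 2 ≤ n)
    (CN : Matrix (Fin (n + 1)) (Fin (n + 1)) ℝ)
    (hCN : ∀ i j, CN i j = if i ≠ j ∧ i ≠ 0 ∧ j ≠ 0 then 1 else 0) :
    CN.charpoly = X * (X + 1) ^ (n - 1) * (X - C ((n : ℝ) - 1)) := by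
  have : Nonempty (Fin n) := ⟨⟨0, by omega⟩⟩
  have hleaves :
      CN.submatrix Fin.succ Fin.succ = (SimpleGraph.completeGraph (Fin n)).adjMatrix ℝ := by
    ext i j
    simp [hCN, Fin.succ_ne_zero]
  rw [CN.charpoly_eq_X_mul_charpoly_submatrix_succ (by simp [hCN]), hleaves,
    SimpleGraph.charpoly_adjMatrix_completeGraph, Fintype.card_fin, mul_assoc]
end

section
/- The common neighborhood energy of the star graph K_{1,n} (n ≥ 1), defined as the sum of the absolute values of the eigenvalues of its common neighborhood matrix, equals 2n - 2. -/
open Polynomial Matrix Finset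

/-!
Two distinct leaves of `K_{1,n}` have exactly the centre as common neighbour, and the centre
shares no neighbour with any vertex, so the common neighbourhood matrix is the adjacency matrix
of the complete graph on the `n` leaves together with an isolated vertex. For a clique on `m`
vertices plus `k` isolated ones, `t • 1 - A` is diagonal plus rank one, and the matrix
determinant lemma gives `det (t • 1 - A) = t ^ k * (t + 1) ^ (m - 1) * (t - (m - 1))` for
`t ∉ {0, -1}`. Hence the spectrum is `0` (`k` times), `-1` (`m - 1` times) and `m - 1`, with
energy `2m - 2`.
-/

section

variable {ι K : Type*} [Fintype ι] [DecidableEq ι] [Field K]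

theorem det_diagonal_add_replicateCol_mul_replicateRow {d : ι → K} (hd : ∀ i, d i ≠ 0)
    (u v : ι → K) :
    (diagonal d + replicateCol Unit u * replicateRow Unit v).det =
      (∏ i, d i) * (1 + ∑ i, v i * u i / d i) := by
  have hdet : IsUnit (diagonal d).det := by
    rw [det_diagonal]
    exact (prod_ne_zero_iff.2 fun i _ => hd i).isUnit
  have hinv : (diagonal d)⁻¹ = diagonal fun i => (d i)⁻¹ :=
    inv_eq_right_inv (by simp [hd])
  rw [det_add_replicateCol_mul_replicateRow hdet, det_diagonal, det_unique, hinv]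
  simp [Matrix.mul_apply, diagonal_apply, div_eq_mul_inv, mul_assoc, mul_comm]

variable (K) in
def cliqueAdjMatrix (p : ι → Prop) [DecidablePred p] : Matrix ι ι K :=
  of fun i j => if i ≠ j ∧ p i ∧ p j then 1 else 0

variable (p : ι → Prop) [DecidablePred p]

theorem scalar_sub_cliqueAdjMatrix (t : K) :
    scalar ι t - cliqueAdjMatrix K p =
      diagonal (fun i => if p i then t + 1 else t) +
        replicateCol Unit (fun i => if p i then (-1 : K) else 0) *
          replicateRow Unit (fun i => if p i then (1 : K) else 0) := by
  ext i j
  by_cases hij : i = j <;> by_cases hi : p i <;> by_cases hj : p j <;>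
    simp [cliqueAdjMatrix, Matrix.mul_apply, hij, hi, hj]

theorem det_scalar_sub_cliqueAdjMatrix {t : K} (ht : t ≠ 0) (ht' : t + 1 ≠ 0) :
    (scalar ι t - cliqueAdjMatrix K p).det =
      t ^ #{i | ¬p i} * (t + 1) ^ #{i | p i} * (1 - #{i | p i} / (t + 1)) := by
  have hd : ∀ i, (if p i then t + 1 else t) ≠ 0 := fun i => by split_ifs <;> assumption
  rw [scalar_sub_cliqueAdjMatrix, det_diagonal_add_replicateCol_mul_replicateRow hd,
    prod_ite, prod_const, prod_const, mul_comm ((t + 1) ^ _)]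
  have hsum : ∑ i, (if p i then (1 : K) else 0) * (if p i then -1 else 0) /
      (if p i then t + 1 else t) = -(#{i | p i} / (t + 1)) := by
    calc _ = ∑ i, if p i then -(t + 1)⁻¹ else 0 :=
          sum_congr rfl fun i _ => by split_ifs <;> simp [div_eq_mul_inv]
      _ = _ := by rw [sum_ite]; simp [div_eq_mul_inv]
  rw [hsum, sub_eq_add_neg]

theorem charpoly_cliqueAdjMatrix [Infinite K] (hp : 0 < #{i | p i}) :
    (cliqueAdjMatrix K p).charpoly =
      X ^ #{i | ¬p i} * (X + 1) ^ (#{i | p i} - 1) * (X - C ((#{i | p i} : K) - 1)) := by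
  apply eq_of_infinite_eval_eq
  refine Set.Infinite.mono (s := {0, -1}ᶜ) (fun t ht => ?_) (Set.toFinite _).infinite_compl
  obtain ⟨ht, ht'⟩ : t ≠ 0 ∧ t + 1 ≠ 0 := by
    simpa [add_eq_zero_iff_eq_neg] using ht
  obtain ⟨m, hm⟩ : ∃ m, #{i | p i} = m + 1 := Nat.exists_eq_add_one.2 hp
  rw [Set.mem_ofPred_eq, eval_charpoly, det_scalar_sub_cliqueAdjMatrix p ht ht', hm]
  simp only [eval_mul, eval_pow, eval_X, eval_add, eval_one, eval_sub, eval_C,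
    add_tsub_cancel_right, Nat.cast_add, Nat.cast_one]
  field_simp
  ring

theorem sum_abs_roots_charpoly_cliqueAdjMatrix [LinearOrder K] [IsStrictOrderedRing K]
    (hp : 0 < #{i | p i}) :
    ((cliqueAdjMatrix K p).charpoly.roots.map (|·|)).sum = 2 * #{i | p i} - 2 := by
  have hmonic : ((X : K[X]) ^ #{i | ¬p i} * (X + C 1) ^ (#{i | p i} - 1)).Monic :=
    (monic_X_pow _).mul ((monic_X_add_C 1).pow _)
  rw [charpoly_cliqueAdjMatrix p hp, ← C_1, roots_mul (hmonic.mul (monic_X_sub_C _)).ne_zero,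
    roots_mul hmonic.ne_zero, roots_X_pow, roots_pow, roots_X_add_C, roots_X_sub_C]
  have hm : (1 : K) ≤ #{i | p i} := by exact_mod_cast hp
  simp only [Multiset.nsmul_singleton, Multiset.map_add, Multiset.map_replicate, abs_zero, abs_neg,
    abs_one, Multiset.map_singleton, abs_of_nonneg (sub_nonneg.2 hm), Multiset.sum_add,
    Multiset.sum_replicate, nsmul_eq_mul, Nat.cast_sub hp, Nat.cast_one,
    mul_one, Multiset.sum_singleton]
  ring

end

theorem star_cn_energy (n : ℕ) (hn : 1 ≤ n)
    (CN : Matrix (Fin (n + 1)) (Fin (n + 1)) ℝ)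
    (hCN : ∀ i j, CN i j = if i ≠ j ∧ i ≠ 0 ∧ j ≠ 0 then 1 else 0) :
    (CN.charpoly.roots.map (fun x => |x|)).sum = 2 * (n : ℝ) - 2 := by
  have hclique : CN = cliqueAdjMatrix ℝ (· ≠ 0) := by
    ext i j
    rw [hCN, cliqueAdjMatrix, of_apply]
  have hleaves : #{i : Fin (n + 1) | i ≠ 0} = n := by
    rw [filter_ne', card_erase_of_mem (mem_univ _), card_univ, Fintype.card_fin,
      add_tsub_cancel_right]
  rw [hclique, sum_abs_roots_charpoly_cliqueAdjMatrix _ (by rw [hleaves]; exact hn), hleaves]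
end

section
/- For every prime p, 2 + 2p^2√3 + (2p+2)√(p^2-1) + 4p√(3p(p-1)) < 4p^4 + p^2 + p + 4. (This shows B(D_{2p^2}), with 4p^4 + p^2 + p + 4 vertices and this energy, is hypoenergetic.) -/
/-! Bounding `√3 < 2`, `√(p² - 1) < p` and `√(3p(p - 1)) < 2p` leaves the polynomial inequality
`4p⁴ - 13p² - p + 2 ≥ 0`, which holds as soon as `p ≥ 2`. -/

open Real

theorem Real.sqrt_three_lt_two : √3 < 2 :=
  (sqrt_lt' two_pos).mpr (by norm_num)

theorem Real.sqrt_sq_sub_one_lt {x : ℝ} (hx : 0 < x) : √(x ^ 2 - 1) < x :=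
  (sqrt_lt' hx).mpr (by linarith)

theorem Real.sqrt_three_mul_mul_sub_one_lt {x : ℝ} (hx : 0 < x) : √(3 * x * (x - 1)) < 2 * x :=
  (sqrt_lt' (by positivity)).mpr (by nlinarith)

theorem energy_B_D2p2_lt_of_two_le {x : ℝ} (hx : 2 ≤ x) :
    2 + 2 * x ^ 2 * √3 + (2 * x + 2) * √(x ^ 2 - 1) + 4 * x * √(3 * x * (x - 1))
      < 4 * x ^ 4 + x ^ 2 + x + 4 := by
  have hx0 : 0 < x := by linarith
  calc _ < 2 + 2 * x ^ 2 * 2 + (2 * x + 2) * x + 4 * x * (2 * x) := by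
        gcongr
        · exact sqrt_three_lt_two
        · exact sqrt_sq_sub_one_lt hx0
        · exact sqrt_three_mul_mul_sub_one_lt hx0
    _ ≤ 4 * x ^ 4 + x ^ 2 + x + 4 := by nlinarith [sq_nonneg (x - 2), sq_nonneg (x ^ 2 - 4)]

theorem B_D2p2_hypoenergetic (p : ℕ) (hp : p.Prime) :
    2 + 2 * (p : ℝ) ^ 2 * Real.sqrt 3 + (2 * (p : ℝ) + 2) * Real.sqrt ((p : ℝ) ^ 2 - 1)
      + 4 * (p : ℝ) * Real.sqrt (3 * (p : ℝ) * ((p : ℝ) - 1))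
      < 4 * (p : ℝ) ^ 4 + (p : ℝ) ^ 2 + (p : ℝ) + 4 :=
  energy_B_D2p2_lt_of_two_le (mod_cast hp.two_le)
end

section
/- For every prime p, 8p^4 + 2p^2 + 2p + 6 - (32p^8 + 2p^4 + 4p^3 + 18p^2 + 16p + 32)/(4p^4 + p^2 + p + 4) = (16p^6 + 16p^5 + 56p^4 - 2p^2 - 2p - 8)/(4p^4 + p^2 + p + 4) > 0; hence B(D_{2p^2}) is neither L-hyperenergetic nor Q-hyperenergetic. -/
/-!
Over the common denominator `4x⁴ + x² + x + 4`, which is positive for every real `x`, the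
difference is a polynomial identity. For `x ≥ 1` the negative terms of the numerator satisfy
`2x² + 2x + 8 ≤ 12x⁴ < 56x⁴`, so the quotient is positive at every prime.
-/

lemma energy_gap_denom_pos (x : ℝ) : 0 < 4 * x ^ 4 + x ^ 2 + x + 4 := by
  nlinarith [sq_nonneg (x ^ 2), sq_nonneg (x + 1 / 2)]

lemma energy_gap_eq (x : ℝ) :
    8 * x ^ 4 + 2 * x ^ 2 + 2 * x + 6
        - (32 * x ^ 8 + 2 * x ^ 4 + 4 * x ^ 3 + 18 * x ^ 2 + 16 * x + 32)
          / (4 * x ^ 4 + x ^ 2 + x + 4)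
      = (16 * x ^ 6 + 16 * x ^ 5 + 56 * x ^ 4 - 2 * x ^ 2 - 2 * x - 8)
          / (4 * x ^ 4 + x ^ 2 + x + 4) := by
  have hden := (energy_gap_denom_pos x).ne'
  rw [eq_div_iff hden, sub_mul, div_mul_cancel₀ _ hden]
  ring

lemma energy_gap_numerator_pos {x : ℝ} (hx : 1 ≤ x) :
    0 < 16 * x ^ 6 + 16 * x ^ 5 + 56 * x ^ 4 - 2 * x ^ 2 - 2 * x - 8 := by
  have h1 : 1 ≤ x ^ 4 := one_le_pow₀ hx
  have hx2 : x ^ 2 ≤ x ^ 4 := pow_le_pow_right₀ hx (by norm_num)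
  have hx1 : x ≤ x ^ 4 := le_self_pow₀ hx (by norm_num)
  have h5 : 0 ≤ x ^ 5 := by positivity
  have h6 : 0 ≤ x ^ 6 := by positivity
  linarith

theorem B_D2p2_not_L_hyperenergetic (p : ℕ) (hp : p.Prime) :
    8 * (p : ℝ) ^ 4 + 2 * (p : ℝ) ^ 2 + 2 * (p : ℝ) + 6
        - (32 * (p : ℝ) ^ 8 + 2 * (p : ℝ) ^ 4 + 4 * (p : ℝ) ^ 3 + 18 * (p : ℝ) ^ 2
            + 16 * (p : ℝ) + 32) / (4 * (p : ℝ) ^ 4 + (p : ℝ) ^ 2 + (p : ℝ) + 4)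
      = (16 * (p : ℝ) ^ 6 + 16 * (p : ℝ) ^ 5 + 56 * (p : ℝ) ^ 4 - 2 * (p : ℝ) ^ 2
          - 2 * (p : ℝ) - 8) / (4 * (p : ℝ) ^ 4 + (p : ℝ) ^ 2 + (p : ℝ) + 4) ∧
      (16 * (p : ℝ) ^ 6 + 16 * (p : ℝ) ^ 5 + 56 * (p : ℝ) ^ 4 - 2 * (p : ℝ) ^ 2
          - 2 * (p : ℝ) - 8) / (4 * (p : ℝ) ^ 4 + (p : ℝ) ^ 2 + (p : ℝ) + 4) > 0 := by
  have hp1 : (1 : ℝ) ≤ p := by exact_mod_cast hp.one_le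
  exact ⟨energy_gap_eq p,
    div_pos (energy_gap_numerator_pos hp1) (energy_gap_denom_pos p)⟩
end

section
/- For every prime p ≥ 3, the number 2 + 2√3 + 2p√12 + 2√(p^2-1) + 2√(3p^2-3) + 2√(12p^2-12p) is strictly less than 16p^2 + p + 5. (Hence B(Q_{4p}) is hypoenergetic for p ≥ 3.) -/
/-!
Each square root is bounded by the square root of a perfect square just above its radicand:
`√3 < 2`, `√12 < 4`, `√(x² - 1) < x`, `√(3x² - 3) < 2x` and `√(12x² - 12x) < 4x`.
This bounds the left-hand side by the linear function `22x + 6`, which the quadratic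
`16x² + x + 5` exceeds as soon as `x ≥ 2`.
-/

namespace Real

theorem sqrt_energy_sum_lt {x : ℝ} (hx : 0 < x) :
    2 + 2 * √3 + 2 * x * √12 + 2 * √(x ^ 2 - 1) + 2 * √(3 * x ^ 2 - 3)
      + 2 * √(12 * x ^ 2 - 12 * x) < 22 * x + 6 := by
  have h3 : √3 < 2 := (sqrt_lt' two_pos).mpr (by norm_num)
  have h12 : √12 < 4 := (sqrt_lt' four_pos).mpr (by norm_num)
  have hsq : √(x ^ 2 - 1) < x := (sqrt_lt' hx).mpr (by linarith)
  have hsq3 : √(3 * x ^ 2 - 3) < 2 * x := (sqrt_lt' (by positivity)).mpr (by nlinarith)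
  have hsq12 : √(12 * x ^ 2 - 12 * x) < 4 * x := (sqrt_lt' (by positivity)).mpr (by nlinarith)
  have hx12 : x * √12 < x * 4 := mul_lt_mul_of_pos_left h12 hx
  linarith

end Real

theorem B_Q4p_hypoenergetic_general (p : ℕ) (hp3 : 3 ≤ p) :
    2 + 2 * Real.sqrt 3 + 2 * (p : ℝ) * Real.sqrt 12 + 2 * Real.sqrt ((p : ℝ) ^ 2 - 1)
      + 2 * Real.sqrt (3 * (p : ℝ) ^ 2 - 3) + 2 * Real.sqrt (12 * (p : ℝ) ^ 2 - 12 * (p : ℝ))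
      < 16 * (p : ℝ) ^ 2 + (p : ℝ) + 5 := by
  have hp : (3 : ℝ) ≤ p := by exact_mod_cast hp3
  calc _ < 22 * (p : ℝ) + 6 := Real.sqrt_energy_sum_lt (by linarith)
    _ ≤ 16 * (p : ℝ) ^ 2 + p + 5 := by nlinarith

theorem B_Q4p_hypoenergetic (p : ℕ) (hp : p.Prime) (hp3 : 3 ≤ p) :
    2 + 2 * Real.sqrt 3 + 2 * (p : ℝ) * Real.sqrt 12 + 2 * Real.sqrt ((p : ℝ) ^ 2 - 1)
      + 2 * Real.sqrt (3 * (p : ℝ) ^ 2 - 3) + 2 * Real.sqrt (12 * (p : ℝ) ^ 2 - 12 * (p : ℝ))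
      < 16 * (p : ℝ) ^ 2 + (p : ℝ) + 5 :=
  B_Q4p_hypoenergetic_general p hp3
end

section
/- For every prime p ≥ 3, the sum 2 + 2√3 + 2p^2√12 + 2√(p^2-1) + 2√(3p^2-3) + 2√(3p^4-3p^2) + 2(p-1)√(12p^2-12p) + 2√(13p^4-12p^3+11p^2-12p) is strictly less than 16p^4 + p^2 + p + 5. (Hence B(Q_{4p^2}) is hypoenergetic for p ≥ 3.) -/
lemma two_sqrt_le (x : ℝ) (hx : 0 ≤ x) : 2 * Real.sqrt x ≤ x + 1 := by
  nlinarith [Real.sq_sqrt hx, Real.sqrt_nonneg x, sq_nonneg (Real.sqrt x - 1)]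

theorem B_Q4p2_hypoenergetic (p : ℕ) (hp : p.Prime) (hp3 : 3 ≤ p) :
    2 + 2 * Real.sqrt 3 + 2 * (p : ℝ) ^ 2 * Real.sqrt 12
      + 2 * Real.sqrt ((p : ℝ) ^ 2 - 1) + 2 * Real.sqrt (3 * (p : ℝ) ^ 2 - 3)
      + 2 * Real.sqrt (3 * (p : ℝ) ^ 4 - 3 * (p : ℝ) ^ 2)
      + 2 * ((p : ℝ) - 1) * Real.sqrt (12 * (p : ℝ) ^ 2 - 12 * (p : ℝ))
      + 2 * Real.sqrt (13 * (p : ℝ) ^ 4 - 12 * (p : ℝ) ^ 3 + 11 * (p : ℝ) ^ 2 - 12 * (p : ℝ))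
      < 16 * (p : ℝ) ^ 4 + (p : ℝ) ^ 2 + (p : ℝ) + 5 := by
  have hp3' : (3 : ℝ) ≤ (p : ℝ) := by exact_mod_cast hp3
  have hpos : (0 : ℝ) ≤ (p : ℝ) - 1 := by linarith
  have hpsq : (0 : ℝ) ≤ (p : ℝ) ^ 2 := sq_nonneg _
  have h1 := two_sqrt_le 3 (by norm_num)
  have h2 : Real.sqrt 12 < 4 := by
    have : (12 : ℝ) < 4 ^ 2 := by norm_num
    nlinarith [Real.sq_sqrt (by norm_num : (12:ℝ) ≥ 0).le, Real.sqrt_nonneg 12,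
      Real.sqrt_lt_sqrt (by norm_num : (0:ℝ) ≤ 12) this,
      Real.sqrt_sq (by norm_num : (0:ℝ) ≤ 4)]
  have h3 := two_sqrt_le ((p : ℝ) ^ 2 - 1) (by nlinarith)
  have h4 := two_sqrt_le (3 * (p : ℝ) ^ 2 - 3) (by nlinarith)
  have h5 := two_sqrt_le (3 * (p : ℝ) ^ 4 - 3 * (p : ℝ) ^ 2) (by nlinarith [mul_nonneg hpsq (show (0:ℝ) ≤ (p:ℝ)^2 - 1 by nlinarith)])
  have h6 := two_sqrt_le (12 * (p : ℝ) ^ 2 - 12 * (p : ℝ)) (by nlinarith)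
  have h7 := two_sqrt_le (13 * (p : ℝ) ^ 4 - 12 * (p : ℝ) ^ 3 + 11 * (p : ℝ) ^ 2 - 12 * (p : ℝ)) (by nlinarith [mul_nonneg (mul_nonneg hpsq (by linarith : (0:ℝ) ≤ (p:ℝ))) (show (0:ℝ) ≤ (p:ℝ) - 3 by linarith), mul_nonneg (by linarith : (0:ℝ) ≤ (p:ℝ)) (show (0:ℝ) ≤ (p:ℝ) - 3 by linarith)])
  have hs : (0:ℝ) ≤ Real.sqrt (12 * (p : ℝ) ^ 2 - 12 * (p : ℝ)) := Real.sqrt_nonneg _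
  nlinarith [mul_le_mul_of_nonneg_left h6 hpos, mul_nonneg hpos hs,
    mul_lt_mul_of_pos_left h2 (by positivity : (0:ℝ) < 2 * (p:ℝ)^2)]
end

section
/- For every prime p, the common neighborhood energy of the graph K_2 ⊔ pK_{1,3} ⊔ K_{1,p^2-1} ⊔ K_{1,3p(p-1)} equals 8p^2 - 2p - 6, and this is strictly less than 2(n-1)(n-2) where n = 4p^2 + p + 3; hence B(D_{2p}) is not CN-hyperenergetic. -/
open Polynomial

/-- The common neighborhood matrix of a finite simple graph: the `(i,j)` entry is the
number of vertices adjacent to both `i` and `j` when `i ≠ j`, and `0` when `i = j`. -/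
noncomputable def cnMatrix {V : Type*} [Fintype V] [DecidableEq V] (G : SimpleGraph V) :
    Matrix V V ℝ :=
  fun i j => if i = j then 0 else ({k | G.Adj i k ∧ G.Adj j k}.ncard : ℝ)

/-- The common neighborhood energy: the sum of the absolute values of the eigenvalues of
the common neighborhood matrix. -/
noncomputable def cnEnergy {V : Type*} [Fintype V] [DecidableEq V] (G : SimpleGraph V) : ℝ :=
  ((cnMatrix G).charpoly.roots.map (fun x => |x|)).sum

/-- The star `K_{1,m}` on `m + 1` vertices, with center `0`. -/
def starGraph (m : ℕ) : SimpleGraph (Fin (m + 1)) :=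
  SimpleGraph.fromRel (fun i j => i = 0 ∨ j = 0)

/-- `p` disjoint copies of the star `K_{1,m}`. -/
def starCopies (p m : ℕ) : SimpleGraph (Fin p × Fin (m + 1)) :=
  SimpleGraph.fromRel (fun a b => a.1 = b.1 ∧ (a.2 = 0 ∨ b.2 = 0))

/-!
The CN-matrix of a disjoint union is block diagonal, so CN-energy is additive. Writing the
centre of the star `K_{1,m}` last, its CN-matrix becomes `(J - I) ⊕ 0`, where `J` is the all-ones
matrix on the `m` leaves; since `J` has characteristic polynomial `X^m - m X^(m-1)`, the
eigenvalues are `m - 1`, then `-1` with multiplicity `m - 1`, and `0`, so `E_CN(K_{1,m}) = 2m - 2`.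
Moreover `K_2 = K_{1,1}`, and `p` disjoint copies of `K_{1,3}` form the box product of the
edgeless graph on `p` vertices with `K_{1,3}`, whose CN-matrix is block diagonal with `p` equal
blocks. Hence the energy is `0 + 4p + (2p^2 - 4) + (6p(p - 1) - 2) = 8p^2 - 2p - 6`.
-/

open Matrix
-- Mathlib has its own `SimpleGraph.starGraph`, which would clash with the star above.
open SimpleGraph hiding starGraph

noncomputable def absRootSum (q : ℝ[X]) : ℝ := (q.roots.map (fun x => |x|)).sum

lemma absRootSum_mul {q r : ℝ[X]} (hq : q ≠ 0) (hr : r ≠ 0) :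
    absRootSum (q * r) = absRootSum q + absRootSum r := by
  simp only [absRootSum, roots_mul (mul_ne_zero hq hr), Multiset.map_add, Multiset.sum_add]

lemma absRootSum_pow (q : ℝ[X]) (n : ℕ) : absRootSum (q ^ n) = n * absRootSum q := by
  simp only [absRootSum, roots_pow, Multiset.map_nsmul, Multiset.sum_nsmul, nsmul_eq_mul]

lemma absRootSum_X_sub_C (a : ℝ) : absRootSum (X - C a) = |a| := by
  simp [absRootSum]

lemma absRootSum_X : absRootSum (X : ℝ[X]) = 0 := by
  simp [absRootSum]

lemma charpoly_vecMulVec_one_sub_one {R n : Type*} [CommRing R] [Fintype n] [DecidableEq n]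
    [Nonempty n] :
    (vecMulVec (1 : n → R) 1 - 1).charpoly =
      (X - C ((Fintype.card n : R) - 1)) * (X + 1) ^ (Fintype.card n - 1) := by
  obtain ⟨k, hk⟩ : ∃ k, Fintype.card n = k + 1 :=
    Nat.exists_eq_succ_of_ne_zero Fintype.card_ne_zero
  have h := charpoly_sub_scalar (vecMulVec (1 : n → R) 1) 1
  rw [scalar_apply, diagonal_one, charpoly_vecMulVec, one_dotProduct_one] at h
  rw [h, hk, Nat.add_sub_cancel]
  simp only [smul_eq_C_mul, sub_comp, mul_comp, pow_comp, X_comp, C_comp, C_1]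
  simp only [Nat.cast_add, Nat.cast_one, map_add, map_sub, map_one, map_natCast]
  ring

lemma charpoly_blockDiagonal {R n o : Type*} [CommRing R] [Fintype n] [DecidableEq n]
    [Fintype o] [DecidableEq o] (M : o → Matrix n n R) :
    (blockDiagonal M).charpoly = ∏ k, (M k).charpoly := by
  have : charmatrix (blockDiagonal M) = blockDiagonal fun k => charmatrix (M k) := by
    simp only [charmatrix, RingHom.mapMatrix_apply, scalar_apply,
      blockDiagonal_map _ _ (map_zero C)]
    rw [← blockDiagonal_diagonal fun _ _ => X, ← blockDiagonal_sub]
    rfl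
  rw [Matrix.charpoly, this, det_blockDiagonal]
  rfl

section commonNeighbors

variable {V W : Type*}

lemma commonNeighbors_sum_inl (G : SimpleGraph V) (H : SimpleGraph W) (i j : V) :
    (G ⊕g H).commonNeighbors (.inl i) (.inl j) = Sum.inl '' G.commonNeighbors i j := by
  ext (k | k) <;> simp [mem_commonNeighbors]

lemma commonNeighbors_sum_inr (G : SimpleGraph V) (H : SimpleGraph W) (i j : W) :
    (G ⊕g H).commonNeighbors (.inr i) (.inr j) = Sum.inr '' H.commonNeighbors i j := by
  ext (k | k) <;> simp [mem_commonNeighbors]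

lemma commonNeighbors_sum_inl_inr (G : SimpleGraph V) (H : SimpleGraph W) (i : V) (j : W) :
    (G ⊕g H).commonNeighbors (.inl i) (.inr j) = ∅ := by
  ext (k | k) <;> simp [mem_commonNeighbors]

lemma commonNeighbors_bot_boxProd (H : SimpleGraph W) (a : V) (i j : W) :
    ((⊥ : SimpleGraph V) □ H).commonNeighbors (a, i) (a, j) =
      Prod.mk a '' H.commonNeighbors i j := by
  ext ⟨b, k⟩
  simp only [mem_commonNeighbors, boxProd_adj, bot_adj, false_and, false_or, Set.mem_image,
    Prod.mk.injEq]
  aesop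

lemma commonNeighbors_bot_boxProd_of_ne (H : SimpleGraph W) {a b : V} (hab : a ≠ b) (i j : W) :
    ((⊥ : SimpleGraph V) □ H).commonNeighbors (a, i) (b, j) = ∅ := by
  ext ⟨c, k⟩
  simp only [mem_commonNeighbors, boxProd_adj, bot_adj, false_and, false_or,
    Set.mem_empty_iff_false, iff_false]
  rintro ⟨⟨-, rfl⟩, -, rfl⟩
  exact hab rfl

lemma starGraph_commonNeighbors_succ (m : ℕ) (i j : Fin m) :
    (starGraph m).commonNeighbors i.succ j.succ = {0} := by
  ext k
  simp only [mem_commonNeighbors, starGraph, fromRel_adj, Set.mem_singleton_iff]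
  grind [Fin.succ_ne_zero]

lemma starGraph_commonNeighbors_zero_succ (m : ℕ) (j : Fin m) :
    (starGraph m).commonNeighbors 0 j.succ = ∅ := by
  ext k
  simp only [mem_commonNeighbors, starGraph, fromRel_adj, Set.mem_empty_iff_false, iff_false]
  grind [Fin.succ_ne_zero]

end commonNeighbors

section cnMatrix

variable {V W : Type*} [Fintype V] [DecidableEq V] [Fintype W] [DecidableEq W]

lemma cnMatrix_apply (G : SimpleGraph V) (i j : V) :
    cnMatrix G i j = if i = j then 0 else ((G.commonNeighbors i j).ncard : ℝ) :=
  rfl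

lemma cnMatrix_sum (G : SimpleGraph V) (H : SimpleGraph W) :
    cnMatrix (G ⊕g H) = fromBlocks (cnMatrix G) 0 0 (cnMatrix H) := by
  ext (i | i) (j | j)
  · simp only [cnMatrix_apply, fromBlocks_apply₁₁, Sum.inl.injEq, commonNeighbors_sum_inl,
      Set.ncard_image_of_injective _ Sum.inl_injective]
  · simp [cnMatrix_apply, commonNeighbors_sum_inl_inr]
  · simp [cnMatrix_apply, commonNeighbors_symm _ (Sum.inr i), commonNeighbors_sum_inl_inr]
  · simp only [cnMatrix_apply, fromBlocks_apply₂₂, Sum.inr.injEq, commonNeighbors_sum_inr,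
      Set.ncard_image_of_injective _ Sum.inr_injective]

lemma reindex_cnMatrix_bot_boxProd (H : SimpleGraph W) :
    reindex (Equiv.prodComm V W) (Equiv.prodComm V W) (cnMatrix ((⊥ : SimpleGraph V) □ H)) =
      blockDiagonal fun _ => cnMatrix H := by
  ext ⟨i, a⟩ ⟨j, b⟩
  rcases eq_or_ne a b with rfl | hab
  · simp [cnMatrix_apply, blockDiagonal_apply, commonNeighbors_bot_boxProd,
      Set.ncard_image_of_injective _ (Prod.mk_right_injective a)]
  · simp [cnMatrix_apply, blockDiagonal_apply, commonNeighbors_bot_boxProd_of_ne _ hab, hab]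

lemma reindex_cnMatrix_starGraph (m : ℕ) :
    reindex ((finSuccEquiv m).trans (Equiv.optionEquivSumPUnit.{0} (Fin m)))
        ((finSuccEquiv m).trans (Equiv.optionEquivSumPUnit.{0} (Fin m))) (cnMatrix (starGraph m)) =
      fromBlocks (vecMulVec 1 1 - 1) 0 0 0 := by
  ext (i | _) (j | _)
  · by_cases hij : i = j
    · simp [cnMatrix_apply, hij]
    · simp [cnMatrix_apply, hij, starGraph_commonNeighbors_succ, one_apply_ne hij]
  · simp [cnMatrix_apply, Fin.succ_ne_zero, commonNeighbors_symm _ i.succ,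
      starGraph_commonNeighbors_zero_succ]
  · simp [cnMatrix_apply, (Fin.succ_ne_zero j).symm, starGraph_commonNeighbors_zero_succ]
  · simp [cnMatrix_apply]

end cnMatrix

section cnEnergy

variable {V W : Type*} [Fintype V] [DecidableEq V] [Fintype W] [DecidableEq W]

lemma cnEnergy_eq_absRootSum (G : SimpleGraph V) :
    cnEnergy G = absRootSum (cnMatrix G).charpoly :=
  rfl

lemma cnEnergy_sum (G : SimpleGraph V) (H : SimpleGraph W) :
    cnEnergy (G ⊕g H) = cnEnergy G + cnEnergy H := by
  simp only [cnEnergy_eq_absRootSum, cnMatrix_sum, charpoly_fromBlocks_zero₁₂]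
  exact absRootSum_mul (charpoly_monic _).ne_zero (charpoly_monic _).ne_zero

lemma cnEnergy_bot_boxProd (H : SimpleGraph W) :
    cnEnergy ((⊥ : SimpleGraph V) □ H) = Fintype.card V * cnEnergy H := by
  rw [cnEnergy_eq_absRootSum, ← charpoly_reindex (Equiv.prodComm V W),
    reindex_cnMatrix_bot_boxProd, charpoly_blockDiagonal, Finset.prod_const, Finset.card_univ,
    absRootSum_pow, cnEnergy_eq_absRootSum]

end cnEnergy

lemma charpoly_cnMatrix_starGraph (m : ℕ) [NeZero m] :
    (cnMatrix (starGraph m)).charpoly = (X - C ((m : ℝ) - 1)) * (X + 1) ^ (m - 1) * X := by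
  rw [← charpoly_reindex ((finSuccEquiv m).trans (Equiv.optionEquivSumPUnit.{0} (Fin m))),
    reindex_cnMatrix_starGraph, charpoly_fromBlocks_zero₁₂, charpoly_vecMulVec_one_sub_one,
    charpoly_zero, Fintype.card_fin, Fintype.card_unique, pow_one]

lemma cnEnergy_starGraph (m : ℕ) [NeZero m] : cnEnergy (starGraph m) = 2 * m - 2 := by
  have hm : (1 : ℝ) ≤ m := by exact_mod_cast NeZero.one_le
  have hX : (X + 1 : ℝ[X]) = X - C (-1) := by simp
  rw [cnEnergy_eq_absRootSum, charpoly_cnMatrix_starGraph, hX,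
    absRootSum_mul (mul_ne_zero (X_sub_C_ne_zero _) (pow_ne_zero _ (X_sub_C_ne_zero _))) X_ne_zero,
    absRootSum_mul (X_sub_C_ne_zero _) (pow_ne_zero _ (X_sub_C_ne_zero _)), absRootSum_pow,
    absRootSum_X_sub_C, absRootSum_X_sub_C, absRootSum_X, abs_of_nonneg (by linarith),
    abs_neg, abs_one, Nat.cast_sub NeZero.one_le]
  push_cast
  ring

lemma top_eq_starGraph_one : (⊤ : SimpleGraph (Fin 2)) = starGraph 1 := by
  ext i j
  fin_cases i <;> fin_cases j <;> simp [starGraph]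

lemma starCopies_eq_bot_boxProd (p m : ℕ) :
    starCopies p m = (⊥ : SimpleGraph (Fin p)) □ starGraph m := by
  ext ⟨a, i⟩ ⟨b, j⟩
  simp only [starCopies, starGraph, fromRel_adj, boxProd_adj, bot_adj, ne_eq, Prod.mk.injEq,
    not_and, false_and, false_or]
  tauto

theorem B_D2p_cn_energy (p : ℕ) (hp : p.Prime)
    (G : SimpleGraph
      ((Fin 2 ⊕ Fin p × Fin 4) ⊕ Fin (p ^ 2 - 1 + 1) ⊕ Fin (3 * p * (p - 1) + 1)))
    (hG : G = ((⊤ : SimpleGraph (Fin 2)) ⊕g starCopies p 3)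
        ⊕g (starGraph (p ^ 2 - 1) ⊕g starGraph (3 * p * (p - 1)))) :
    cnEnergy G = 8 * (p : ℝ) ^ 2 - 2 * (p : ℝ) - 6 ∧
      cnEnergy G < 2 * ((4 * (p : ℝ) ^ 2 + (p : ℝ) + 3) - 1)
        * ((4 * (p : ℝ) ^ 2 + (p : ℝ) + 3) - 2) := by
  have hp2 : 2 ≤ p := hp.two_le
  have hsq : 1 ≤ p ^ 2 - 1 := by have := Nat.pow_le_pow_left hp2 2; omega
  have : NeZero (p ^ 2 - 1) := ⟨by omega⟩
  have : NeZero (3 * p * (p - 1)) := ⟨(Nat.mul_pos (by omega) (by omega)).ne'⟩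
  have henergy : cnEnergy G = 8 * (p : ℝ) ^ 2 - 2 * p - 6 := by
    rw [hG, cnEnergy_sum, cnEnergy_sum, cnEnergy_sum, top_eq_starGraph_one,
      starCopies_eq_bot_boxProd, cnEnergy_bot_boxProd, cnEnergy_starGraph, cnEnergy_starGraph,
      cnEnergy_starGraph, cnEnergy_starGraph, Fintype.card_fin,
      Nat.cast_sub (by omega : 1 ≤ p ^ 2), Nat.cast_mul, Nat.cast_sub (by omega : 1 ≤ p)]
    push_cast
    ring
  refine ⟨henergy, ?_⟩
  have hp2_real : (2 : ℝ) ≤ p := by exact_mod_cast hp2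
  rw [henergy]
  nlinarith
end
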